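/- arXiv:1401.1722 — 7 statements merged into one kernel-verified Lean document; each statement's English description precedes it below -/
import Mathlib

section
/- Let C and D be abelian categories, and let F, G, H : C ⥤ D be functors admitting right adjoints F^∨, G^∨, H^∨ : D ⥤ C. Let α : F ⟶ G and β : G ⟶ H be natural transformations, with mates α^∨ : G^∨ ⟶ F^∨ and β^∨ : H^∨ ⟶ G^∨. Then the sequence F → G → H → 0 is exact in the abelian functor category C ⥤ D if and only if the sequence 0 → H^∨ → G^∨ → F^∨ is exact in D ⥤ C. In particular, a natural transformation between functors admitting right adjoints is an epimorphism if and only if its mate is a monomorphism. -/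
open CategoryTheory CategoryTheory.Limits

section Aux

variable {C : Type*} [Category C] {D : Type*} [Category D]

/-- Naturality of the mate bijection with respect to hom-set adjunction equivalences. -/
lemma homEquiv_naturality_conjugateEquiv
    {L₁ L₂ : C ⥤ D} {R₁ R₂ : D ⥤ C}
    (adj₁ : L₁ ⊣ R₁) (adj₂ : L₂ ⊣ R₂) (α : L₂ ⟶ L₁) {X : C} {Y : D} (g : L₁.obj X ⟶ Y) :
    adj₂.homEquiv X Y (α.app X ≫ g) =
      adj₁.homEquiv X Y g ≫ (conjugateEquiv adj₁ adj₂ α).app Y := by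
  rw [Adjunction.homEquiv_unit, Adjunction.homEquiv_unit, Functor.map_comp, ← Category.assoc,
    ← unit_conjugateEquiv adj₁ adj₂ α X, Category.assoc,
    ← (conjugateEquiv adj₁ adj₂ α).naturality g, ← Category.assoc]

lemma epi_app_iff_mono_app_conjugateEquiv
    {L₁ L₂ : C ⥤ D} {R₁ R₂ : D ⥤ C}
    (adj₁ : L₁ ⊣ R₁) (adj₂ : L₂ ⊣ R₂) (α : L₂ ⟶ L₁) :
    (∀ X, Epi (α.app X)) ↔ ∀ Y, Mono ((conjugateEquiv adj₁ adj₂ α).app Y) := by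
  constructor
  · intro h Y
    refine ⟨fun {Z} k l e => ?_⟩
    apply (adj₁.homEquiv Z Y).symm.injective
    have := h Z
    rw [← cancel_epi (α.app Z)]
    apply (adj₂.homEquiv Z Y).injective
    rw [homEquiv_naturality_conjugateEquiv adj₁ adj₂ α,
      homEquiv_naturality_conjugateEquiv adj₁ adj₂ α,
      Equiv.apply_symm_apply, Equiv.apply_symm_apply, e]
  · intro h X
    refine ⟨fun {Z} g g' e => ?_⟩
    apply (adj₁.homEquiv X Z).injective
    have := h Z
    rw [← cancel_mono ((conjugateEquiv adj₁ adj₂ α).app Z),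
      ← homEquiv_naturality_conjugateEquiv adj₁ adj₂ α,
      ← homEquiv_naturality_conjugateEquiv adj₁ adj₂ α, e]

variable [HasZeroMorphisms D]

lemma cokernelCofork_isColimit_iff {A B P : D} (f : A ⟶ B) (g : B ⟶ P) (w : f ≫ g = 0) :
    Nonempty (IsColimit (CokernelCofork.ofπ g w)) ↔
      ∀ (Y : D), (∀ (h h' : P ⟶ Y), g ≫ h = g ≫ h' → h = h') ∧
        (∀ (h : B ⟶ Y), f ≫ h = 0 → ∃ k : P ⟶ Y, g ≫ k = h) := by
  constructor
  · rintro ⟨hc⟩ Y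
    refine ⟨fun h h' e => Cofork.IsColimit.hom_ext hc (by simpa using e),
      fun h hw => ⟨hc.desc (CokernelCofork.ofπ h hw), Cofork.IsColimit.π_desc hc⟩⟩
  · intro Hc
    exact ⟨CokernelCofork.IsColimit.ofπ g w
      (fun {Z'} h hw => ((Hc Z').2 h hw).choose)
      (fun {Z'} h hw => ((Hc Z').2 h hw).choose_spec)
      (fun {Z'} h hw m hm => (Hc Z').1 m _ (hm.trans ((Hc Z').2 h hw).choose_spec.symm))⟩

lemma kernelFork_isLimit_iff {A B P : D} (g : A ⟶ B) (i : P ⟶ A) (w : i ≫ g = 0) :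
    Nonempty (IsLimit (KernelFork.ofι i w)) ↔
      ∀ (W : D), (∀ (h h' : W ⟶ P), h ≫ i = h' ≫ i → h = h') ∧
        (∀ (h : W ⟶ A), h ≫ g = 0 → ∃ k : W ⟶ P, k ≫ i = h) := by
  constructor
  · rintro ⟨hc⟩ W
    refine ⟨fun h h' e => Fork.IsLimit.hom_ext hc (by simpa using e),
      fun h hw => ⟨hc.lift (KernelFork.ofι h hw), Fork.IsLimit.lift_ι hc⟩⟩
  · intro Hc
    exact ⟨KernelFork.IsLimit.ofι i w
      (fun {W'} h hw => ((Hc W').2 h hw).choose)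
      (fun {W'} h hw => ((Hc W').2 h hw).choose_spec)
      (fun {W'} h hw m hm => (Hc W').1 m _ (hm.trans ((Hc W').2 h hw).choose_spec.symm))⟩

end Aux

section Exactness

variable {C : Type*} [Category C] {D : Type*} [Category D] [Abelian D]

lemma shortComplex_functor_exact_iff_eval (S : ShortComplex (C ⥤ D)) :
    S.Exact ↔ ∀ X, (S.map ((evaluation C D).obj X)).Exact := by
  have inst1 : ∀ X : C, PreservesFiniteLimits ((evaluation C D).obj X) :=
    fun X => ⟨fun J _ _ => inferInstance⟩
  have inst2 : ∀ X : C, PreservesFiniteColimits ((evaluation C D).obj X) :=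
    fun X => ⟨fun J _ _ => inferInstance⟩
  constructor
  · intro hS X
    exact hS.map _
  · intro hS
    simp only [ShortComplex.exact_iff_isZero_homology] at hS ⊢
    rw [IsZero.iff_id_eq_zero]
    ext X
    apply (IsZero.of_iso (hS X) (S.mapHomologyIso ((evaluation C D).obj X)).symm).eq_of_src

end Exactness

section Main

variable {C : Type*} [Category C] {D : Type*} [Category D] [Abelian C] [Abelian D]
  {F G H : C ⥤ D} {F' G' H' : D ⥤ C}

lemma comp_homEquiv_symm_eq_zero_iff
    (adjF : F ⊣ F') (adjG : G ⊣ G') (α : F ⟶ G) {X : C} {Y : D} (h : X ⟶ G'.obj Y) :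
    α.app X ≫ (adjG.homEquiv X Y).symm h = 0 ↔
      h ≫ (conjugateEquiv adjG adjF α).app Y = 0 := by
  have := adjF.isRightAdjoint
  constructor
  · intro e
    have := congrArg (adjF.homEquiv X Y) e
    rw [homEquiv_naturality_conjugateEquiv adjG adjF α, Equiv.apply_symm_apply] at this
    rw [this]
    simp [Adjunction.homEquiv_unit]
  · intro e
    apply (adjF.homEquiv X Y).injective
    rw [homEquiv_naturality_conjugateEquiv adjG adjF α, Equiv.apply_symm_apply, e]
    simp [Adjunction.homEquiv_unit]

lemma pointwise_cokernel_iff_kernel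
    (adjF : F ⊣ F') (adjG : G ⊣ G') (adjH : H ⊣ H')
    (α : F ⟶ G) (β : G ⟶ H)
    (w : ∀ X, α.app X ≫ β.app X = 0)
    (w' : ∀ Y, (conjugateEquiv adjH adjG β).app Y ≫ (conjugateEquiv adjG adjF α).app Y = 0) :
    (∀ X, Nonempty (IsColimit (CokernelCofork.ofπ (β.app X) (w X)))) ↔
      (∀ Y, Nonempty (IsLimit (KernelFork.ofι ((conjugateEquiv adjH adjG β).app Y) (w' Y)))) := by
  simp only [cokernelCofork_isColimit_iff, kernelFork_isLimit_iff]
  constructor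
  · intro hc Y X
    constructor
    · intro k k' e
      apply (adjH.homEquiv X Y).symm.injective
      refine ((hc X) Y).1 _ _ ?_
      apply (adjG.homEquiv X Y).injective
      rw [homEquiv_naturality_conjugateEquiv adjH adjG β,
        homEquiv_naturality_conjugateEquiv adjH adjG β,
        Equiv.apply_symm_apply, Equiv.apply_symm_apply, e]
    · intro h hw
      obtain ⟨k, hk⟩ := ((hc X) Y).2 ((adjG.homEquiv X Y).symm h)
        ((comp_homEquiv_symm_eq_zero_iff adjF adjG α h).2 hw)
      refine ⟨adjH.homEquiv X Y k, ?_⟩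
      apply (adjG.homEquiv X Y).symm.injective
      rw [← homEquiv_naturality_conjugateEquiv adjH adjG β, hk, Equiv.apply_symm_apply]
  · intro hc X Y
    constructor
    · intro h h' e
      apply (adjH.homEquiv X Y).injective
      refine ((hc Y) X).1 _ _ ?_
      rw [← homEquiv_naturality_conjugateEquiv adjH adjG β,
        ← homEquiv_naturality_conjugateEquiv adjH adjG β, e]
    · intro h hw
      have hw' : (adjG.homEquiv X Y h) ≫ (conjugateEquiv adjG adjF α).app Y = 0 := by
        rw [← comp_homEquiv_symm_eq_zero_iff adjF adjG α, Equiv.symm_apply_apply]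
        exact hw
      obtain ⟨k, hk⟩ := ((hc Y) X).2 (adjG.homEquiv X Y h) hw'
      refine ⟨(adjH.homEquiv X Y).symm k, ?_⟩
      apply (adjG.homEquiv X Y).injective
      rw [homEquiv_naturality_conjugateEquiv adjH adjG β, Equiv.apply_symm_apply, hk]

end Main

/-- For abelian categories `C`, `D` and functors `F, G, H : C ⥤ D` with
right adjoints `F', G', H'`, a sequence `F → G → H → 0` is exact in the abelian functor
category `C ⥤ D` if and only if the sequence `0 → H' → G' → F'` of mates is exact in
`D ⥤ C`.  In particular a natural transformation between left adjoints is an epimorphism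
iff its mate is a monomorphism. -/
theorem exact_seq_adjunctions_iff_mates
    {C : Type*} [Category C] {D : Type*} [Category D] [Abelian C] [Abelian D]
    {F G H : C ⥤ D} {F' G' H' : D ⥤ C}
    (adjF : F ⊣ F') (adjG : G ⊣ G') (adjH : H ⊣ H')
    (α : F ⟶ G) (β : G ⟶ H) (w : α ≫ β = 0)
    (w' : conjugateEquiv adjH adjG β ≫ conjugateEquiv adjG adjF α = 0) :
    (((ShortComplex.mk α β w).Exact ∧ Epi β) ↔
      ((ShortComplex.mk (conjugateEquiv adjH adjG β) (conjugateEquiv adjG adjF α) w').Exact ∧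
        Mono (conjugateEquiv adjH adjG β))) ∧
    (Epi α ↔ Mono (conjugateEquiv adjG adjF α)) := by
  have wapp : ∀ X, α.app X ≫ β.app X = 0 := fun X => congr_app w X
  have w'app : ∀ Y, (conjugateEquiv adjH adjG β).app Y ≫ (conjugateEquiv adjG adjF α).app Y = 0 :=
    fun Y => congr_app w' Y
  constructor
  · rw [shortComplex_functor_exact_iff_eval, NatTrans.epi_iff_epi_app,
      shortComplex_functor_exact_iff_eval, NatTrans.mono_iff_mono_app]
    rw [forall_and.symm, forall_and.symm]
    have e1 : ∀ X, ((ShortComplex.mk α β w).map ((evaluation C D).obj X)).Exact ∧ Epi (β.app X) ↔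
        Nonempty (IsColimit (CokernelCofork.ofπ (β.app X) (wapp X))) := fun X =>
      ((ShortComplex.mk α β w).map ((evaluation C D).obj X)).exact_and_epi_g_iff_g_is_cokernel
    have e2 : ∀ Y, ((ShortComplex.mk (conjugateEquiv adjH adjG β) (conjugateEquiv adjG adjF α)
          w').map ((evaluation D C).obj Y)).Exact ∧
          Mono ((conjugateEquiv adjH adjG β).app Y) ↔
        Nonempty (IsLimit (KernelFork.ofι ((conjugateEquiv adjH adjG β).app Y) (w'app Y))) :=
      fun Y => ((ShortComplex.mk (conjugateEquiv adjH adjG β) (conjugateEquiv adjG adjF α)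
          w').map ((evaluation D C).obj Y)).exact_and_mono_f_iff_f_is_kernel
    rw [forall_congr' e1, forall_congr' e2]
    exact pointwise_cokernel_iff_kernel adjF adjG adjH α β wapp w'app
  · rw [NatTrans.epi_iff_epi_app, NatTrans.mono_iff_mono_app]
    exact epi_app_iff_mono_app_conjugateEquiv adjG adjF α
end

section
/- Let C be an abelian category, F : C ⥤ C a functor admitting a right adjoint F^∨ : C ⥤ C, and τ : F ⟶ 𝟭_C a natural transformation, with mate τ^∨ : 𝟭_C ⟶ F^∨. Let I := im(τ), the image of τ in the abelian functor category C ⥤ C, a subobject of 𝟭_C. Then the cokernel functor T_I := coker(I ↪ 𝟭_C) admits a right adjoint, namely T_I^∨ := ker(τ^∨ : 𝟭_C ⟶ F^∨); in particular, I is an ideal functor on C. Moreover, the image of τ^∨ is isomorphic to coker(T_I^∨ ↪ 𝟭_C). -/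
open CategoryTheory CategoryTheory.Limits

namespace ImageIdealAux

variable {C : Type*} [Category C] [Abelian C] {F F' : C ⥤ C} (adjF : F ⊣ F') (τ : F ⟶ 𝟭 C)

omit [Abelian C] in
private lemma mate_app (Y : C) : (conjugateEquiv Adjunction.id adjF τ).app Y
    = adjF.unit.app Y ≫ F'.map (τ.app Y) := by
  dsimp [conjugateEquiv, mateEquiv, Adjunction.id]
  simp

omit [Abelian C] in
private lemma key_homEquiv {X Y : C} (g : X ⟶ Y) :
    adjF.homEquiv X Y (τ.app X ≫ g) = g ≫ (conjugateEquiv Adjunction.id adjF τ).app Y := by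
  have h1 : τ.app X ≫ g = F.map g ≫ τ.app Y := by simpa using (τ.naturality g).symm
  have h2 : g ≫ adjF.unit.app Y = adjF.unit.app X ≫ F'.map (F.map g) := by
    simpa using adjF.unit.naturality g
  rw [mate_app, Adjunction.homEquiv_unit]
  conv_rhs => rw [← Category.assoc, h2, Category.assoc, ← F'.map_comp, ← h1, F'.map_comp]
  simp

private lemma key_iff {X Y : C} (g : X ⟶ Y) :
    τ.app X ≫ g = 0 ↔ g ≫ (conjugateEquiv Adjunction.id adjF τ).app Y = 0 := by
  have h0 : adjF.homEquiv X Y 0 = 0 := by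
    simpa using key_homEquiv adjF τ (0 : X ⟶ Y)
  constructor
  · intro h
    rw [← key_homEquiv adjF τ g, h]
    exact h0
  · intro h
    apply (adjF.homEquiv X Y).injective
    rw [key_homEquiv adjF τ g, h, h0]

/-- pointwise cokernel colimit -/
private noncomputable def cokEval (X : C) :
    IsColimit (CokernelCofork.ofπ (((evaluation C C).obj X).map (cokernel.π τ))
      (by simp only [← Functor.map_comp, cokernel.condition, Functor.map_zero]) :
        CokernelCofork (((evaluation C C).obj X).map τ)) :=
  isColimitCoforkMapOfIsColimit' ((evaluation C C).obj X) (cokernel.condition τ)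
    (cokernelIsCokernel τ)

/-- pointwise kernel limit -/
private noncomputable def kerEval (Y : C) :
    IsLimit (KernelFork.ofι (((evaluation C C).obj Y).map
        (kernel.ι (conjugateEquiv Adjunction.id adjF τ)))
      (by simp only [← Functor.map_comp, kernel.condition, Functor.map_zero]) :
        KernelFork (((evaluation C C).obj Y).map (conjugateEquiv Adjunction.id adjF τ))) :=
  isLimitForkMapOfIsLimit' ((evaluation C C).obj Y)
    (kernel.condition (conjugateEquiv Adjunction.id adjF τ))
    (kernelIsKernel (conjugateEquiv Adjunction.id adjF τ))

private lemma cond1 {X Y : C} (f : (cokernel τ).obj X ⟶ Y) :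
    ((cokernel.π τ).app X ≫ f) ≫ (conjugateEquiv Adjunction.id adjF τ).app Y = 0 := by
  rw [← key_iff adjF τ, ← Category.assoc]
  have : τ.app X ≫ (cokernel.π τ).app X = 0 := by
    rw [← NatTrans.comp_app, cokernel.condition]; rfl
  simp only [Functor.id_obj]
  rw [this, zero_comp]

private lemma cond2 {X Y : C} (h : X ⟶ (kernel (conjugateEquiv Adjunction.id adjF τ)).obj Y) :
    τ.app X ≫ h ≫ (kernel.ι (conjugateEquiv Adjunction.id adjF τ)).app Y = 0 := by
  rw [key_iff adjF τ, Category.assoc]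
  have : (kernel.ι (conjugateEquiv Adjunction.id adjF τ)).app Y ≫
      (conjugateEquiv Adjunction.id adjF τ).app Y = 0 := by
    rw [← NatTrans.comp_app, kernel.condition]; rfl
  simp only [Functor.id_obj]
  rw [this, comp_zero]

private noncomputable def homEquivAux (X Y : C) :
    ((cokernel τ).obj X ⟶ Y) ≃ (X ⟶ (kernel (conjugateEquiv Adjunction.id adjF τ)).obj Y) where
  toFun f := (KernelFork.IsLimit.lift' (kerEval adjF τ Y)
      ((cokernel.π τ).app X ≫ f) (cond1 adjF τ f)).1
  invFun h := (CokernelCofork.IsColimit.desc' (cokEval τ X)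
      (h ≫ (kernel.ι (conjugateEquiv Adjunction.id adjF τ)).app Y) (cond2 adjF τ h)).1
  left_inv f := by
    apply Cofork.IsColimit.hom_ext (cokEval τ X)
    have hd := (CokernelCofork.IsColimit.desc' (cokEval τ X) _ (cond2 adjF τ
      ((KernelFork.IsLimit.lift' (kerEval adjF τ Y)
        ((cokernel.π τ).app X ≫ f) (cond1 adjF τ f)).1))).2
    have hl := (KernelFork.IsLimit.lift' (kerEval adjF τ Y)
        ((cokernel.π τ).app X ≫ f) (cond1 adjF τ f)).2
    simp only [Cofork.π_ofπ, CokernelCofork.π_ofπ, Fork.ι_ofι, KernelFork.ι_ofι, KernelFork.ι_ofι, Cofork.π_ofπ, CokernelCofork.π_ofπ, evaluation_obj_map] at hd hl ⊢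
    rw [hd, hl]
  right_inv h := by
    apply Fork.IsLimit.hom_ext (kerEval adjF τ Y)
    have hd := (CokernelCofork.IsColimit.desc' (cokEval τ X)
      (h ≫ (kernel.ι (conjugateEquiv Adjunction.id adjF τ)).app Y) (cond2 adjF τ h)).2
    have hl := (KernelFork.IsLimit.lift' (kerEval adjF τ Y) _ (cond1 adjF τ
      ((CokernelCofork.IsColimit.desc' (cokEval τ X)
        (h ≫ (kernel.ι (conjugateEquiv Adjunction.id adjF τ)).app Y) (cond2 adjF τ h)).1))).2
    simp only [Fork.ι_ofι, KernelFork.ι_ofι, Cofork.π_ofπ, CokernelCofork.π_ofπ, evaluation_obj_map] at hd hl ⊢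
    rw [hl, hd]

private noncomputable def cokAdjKer :
    cokernel τ ⊣ kernel (conjugateEquiv Adjunction.id adjF τ) :=
  Adjunction.mkOfHomEquiv
    { homEquiv := homEquivAux adjF τ
      homEquiv_naturality_left_symm := by
        intro X' X Y f g
        apply Cofork.IsColimit.hom_ext (cokEval τ X')
        have hd := (CokernelCofork.IsColimit.desc' (cokEval τ X')
          ((f ≫ g) ≫ (kernel.ι (conjugateEquiv Adjunction.id adjF τ)).app Y)
          (cond2 adjF τ (f ≫ g))).2
        have hd2 := (CokernelCofork.IsColimit.desc' (cokEval τ X)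
          (g ≫ (kernel.ι (conjugateEquiv Adjunction.id adjF τ)).app Y) (cond2 adjF τ g)).2
        simp only [homEquivAux, Equiv.coe_fn_symm_mk, Cofork.π_ofπ, CokernelCofork.π_ofπ, Fork.ι_ofι, KernelFork.ι_ofι, KernelFork.ι_ofι, Cofork.π_ofπ, CokernelCofork.π_ofπ, evaluation_obj_map] at hd hd2 ⊢
        rw [hd, ← Category.assoc, ← (cokernel.π τ).naturality f]
        simp only [Functor.id_map, Category.assoc, hd2]
      homEquiv_naturality_right := by
        intro X Y Y' f g
        apply Fork.IsLimit.hom_ext (kerEval adjF τ Y')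
        have hl := (KernelFork.IsLimit.lift' (kerEval adjF τ Y')
          ((cokernel.π τ).app X ≫ f ≫ g) (cond1 adjF τ (f ≫ g))).2
        have hl2 := (KernelFork.IsLimit.lift' (kerEval adjF τ Y)
          ((cokernel.π τ).app X ≫ f) (cond1 adjF τ f)).2
        simp only [homEquivAux, Equiv.coe_fn_mk, Fork.ι_ofι, KernelFork.ι_ofι, Cofork.π_ofπ, CokernelCofork.π_ofπ, evaluation_obj_map] at hl hl2 ⊢
        rw [hl, Category.assoc, (kernel.ι (conjugateEquiv Adjunction.id adjF τ)).naturality g]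
        simp only [Functor.id_map, ← Category.assoc, hl2] }

end ImageIdealAux

open ImageIdealAux in
/-- Let `C` be an abelian category, `F : C ⥤ C` a functor with right
adjoint `F'`, and `τ : F ⟶ 𝟭 C` a natural transformation with mate `τ' : 𝟭 C ⟶ F'`.
Let `I := im τ`, a subfunctor of the identity.  Then the cokernel functor
`T_I := coker (I ↪ 𝟭 C)` admits a right adjoint, namely `ker τ'` (so `I` is an ideal
functor); moreover the image of `τ'` is isomorphic to `coker (ker τ' ↪ 𝟭 C)`. -/
theorem image_of_adjunction_is_ideal_functor
    {C : Type*} [Category C] [Abelian C]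
    {F F' : C ⥤ C} (adjF : F ⊣ F') (τ : F ⟶ 𝟭 C) :
    Nonempty (cokernel (Limits.image.ι τ) ⊣
        kernel (conjugateEquiv Adjunction.id adjF τ)) ∧
      Nonempty (Limits.image (conjugateEquiv Adjunction.id adjF τ) ≅
        cokernel (kernel.ι (conjugateEquiv Adjunction.id adjF τ))) :=
  ⟨⟨Adjunction.ofNatIsoLeft (cokAdjKer adjF τ) (cokernelImageι τ).symm⟩,
   ⟨(Abelian.coimageIsoImage' (conjugateEquiv Adjunction.id adjF τ)).symm⟩⟩
end

section
/- Let I be an ideal functor on an abelian category C, with inclusion ι : I ⟶ 𝟭_C. Then the functor I : C ⥤ C preserves monomorphisms and preserves epimorphisms; consequently, it preserves image factorizations: for every morphism f : X → Y in C, the canonical comparison map gives an isomorphism im(I(f)) ≅ I(im(f)) as subobjects of I(Y). -/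
open CategoryTheory CategoryTheory.Limits

attribute [local instance] CategoryTheory.Abelian.Pseudoelement.objectToSort
  CategoryTheory.Abelian.Pseudoelement.homToFun

/-- An ideal functor `I` on an abelian category `C` (a subfunctor
`ι : I ⟶ 𝟭 C` of the identity such that `coker ι` admits a right adjoint) preserves
monomorphisms and epimorphisms; consequently it preserves image factorizations: for every
morphism `f : X ⟶ Y` the canonical comparison is an isomorphism
`im (I.map f) ≅ I (im f)` of subobjects of `I Y`. -/
theorem ideal_functor_preserves_images
    {C : Type*} [Category C] [Abelian C]
    (I : C ⥤ C) (ι : I ⟶ 𝟭 C) [Mono ι]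
    (T' : C ⥤ C) (adj : cokernel ι ⊣ T') :
    (∀ {X Y : C} (f : X ⟶ Y), Mono f → Mono (I.map f)) ∧
    (∀ {X Y : C} (f : X ⟶ Y), Epi f → Epi (I.map f)) ∧
    (∀ {X Y : C} (f : X ⟶ Y),
      ∃ φ : Limits.image (I.map f) ≅ I.obj (Limits.image f),
        φ.hom ≫ I.map (Limits.image.ι f) = Limits.image.ι (I.map f)) := by
  -- Set-up: the quotient functor `T` and its projection `π`.
  set T : C ⥤ C := cokernel ι with hT
  set π : 𝟭 C ⟶ T := cokernel.π ι with hπ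
  haveI : T.IsLeftAdjoint := ⟨T', ⟨adj⟩⟩
  haveI : PreservesColimitsOfSize T := adj.leftAdjoint_preservesColimits
  -- `I` preserves monomorphisms.
  have hmono : ∀ {X Y : C} (f : X ⟶ Y), Mono f → Mono (I.map f) := by
    intro X Y f hf
    haveI : Mono (ι.app X ≫ f) := mono_comp _ _
    have h : I.map f ≫ ι.app Y = ι.app X ≫ f := ι.naturality f
    exact mono_of_mono_fac h
  -- Pointwise, `π.app Z` is a cokernel of `ι.app Z`.
  have hπcoker : ∀ Z : C,
      IsColimit (CokernelCofork.ofπ (((evaluation C C).obj Z).map π)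
        (by rw [hπ, ← Functor.map_comp, cokernel.condition, Functor.map_zero]) :
          Cofork (((evaluation C C).obj Z).map ι) 0) := fun Z =>
    isColimitCoforkMapOfIsColimit' ((evaluation C C).obj Z) (cokernel.condition ι)
      (cokernelIsCokernel ι)
  -- Pointwise exactness of `I ⟶ 𝟭 ⟶ T`.
  have hexact : ∀ Z : C,
      (ShortComplex.mk (ι.app Z) (π.app Z)
        (by rw [← NatTrans.comp_app, cokernel.condition, zero_app])).Exact := fun Z =>
    ShortComplex.exact_of_g_is_cokernel _ (hπcoker Z)
  -- `I` preserves epimorphisms.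
  have hepi : ∀ {X Y : C} (f : X ⟶ Y), Epi f → Epi (I.map f) := by
    intro X Y f hf
    haveI := hf
    set k : kernel f ⟶ X := kernel.ι f with hk
    -- `f` is a cokernel of its kernel, and `T` preserves this cokernel.
    have hfcoker := Abelian.epiIsCokernelOfKernel
      (KernelFork.ofι (kernel.ι f) (kernel.condition f)) (kernelIsKernel f)
    have hTcoker : IsColimit (CokernelCofork.ofπ (T.map f)
        (by rw [← T.map_comp, kernel.condition, T.map_zero]) : Cofork (T.map k) 0) :=
      isColimitCoforkMapOfIsColimit' T (kernel.condition f) hfcoker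
    have hTexact : (ShortComplex.mk (T.map k) (T.map f)
        (by rw [← T.map_comp, kernel.condition, T.map_zero])).Exact :=
      ShortComplex.exact_of_g_is_cokernel _ hTcoker
    -- Pseudoelement chase.
    apply Abelian.Pseudoelement.epi_of_pseudo_surjective
    intro b
    obtain ⟨a, ha⟩ := Abelian.Pseudoelement.pseudo_surjective_of_epi f ((ι.app Y) b)
    have h1 : (T.map f) ((π.app X) a) = 0 := by
      rw [← Abelian.Pseudoelement.comp_apply, ← π.naturality f]
      show ((𝟭 C).map f ≫ π.app Y) a = 0
      rw [Abelian.Pseudoelement.comp_apply]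
      show (π.app Y) (f a) = 0
      rw [ha, ← Abelian.Pseudoelement.comp_apply, ← NatTrans.comp_app, cokernel.condition, zero_app]
      exact Abelian.Pseudoelement.zero_apply _ _
    obtain ⟨t, ht⟩ := Abelian.Pseudoelement.pseudo_exact_of_exact hTexact _ h1
    obtain ⟨s, hs⟩ := Abelian.Pseudoelement.pseudo_surjective_of_epi (π.app (kernel f)) t
    have h2 : (π.app X) a = (π.app X) (k s) := by
      have hnat : k ≫ π.app X = π.app (kernel f) ≫ T.map k := π.naturality k
      rw [← Abelian.Pseudoelement.comp_apply, hnat, Abelian.Pseudoelement.comp_apply, hs, ht]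
    obtain ⟨z, hz0, hz⟩ := Abelian.Pseudoelement.sub_of_eq_image (π.app X) a (k s) h2
    have hfz : f z = f a := by
      apply hz Y f
      rw [← Abelian.Pseudoelement.comp_apply, kernel.condition]
      exact Abelian.Pseudoelement.zero_apply _ _
    obtain ⟨c, hc⟩ := Abelian.Pseudoelement.pseudo_exact_of_exact (hexact X) z hz0
    refine ⟨c, Abelian.Pseudoelement.pseudo_injective_of_mono (ι.app Y) ?_⟩
    have hnat' : I.map f ≫ ι.app Y = ι.app X ≫ f := ι.naturality f
    rw [← Abelian.Pseudoelement.comp_apply, hnat', Abelian.Pseudoelement.comp_apply, hc, hfz, ha]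
  refine ⟨hmono, hepi, ?_⟩
  -- Image factorizations.
  intro X Y f
  haveI : Epi (I.map (factorThruImage f)) := hepi _ inferInstance
  haveI : StrongEpi (I.map (factorThruImage f)) := strongEpi_of_epi _
  haveI : Mono (I.map (Limits.image.ι f)) := hmono _ inferInstance
  have comm : I.map (factorThruImage f) ≫ I.map (Limits.image.ι f) = I.map f := by
    rw [← I.map_comp, Limits.image.fac]
  exact ⟨(Limits.image.isoStrongEpiMono _ _ comm).symm,
    Limits.image.isoStrongEpiMono_inv_comp_mono _ _ comm⟩
end

section
/- Let I and J be ideal functors on an abelian category C, and let I ⊔ J denote their join as subobjects of the identity functor 𝟭_C in the abelian functor category C ⥤ C. Then I ⊔ J is again an ideal functor on C, and there is a natural isomorphism T_I ∘ T_J ≅ T_{I ⊔ J} (where T_I ∘ T_J applies first T_J and then T_I). -/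
/-!
Being a left adjoint, `T_I` preserves cokernels, so `T_I (T_J X)` is the cokernel of the
composite `J X ⟶ X ⟶ T_I X`. Quotienting `X` first by `I X` and then by the image of `J X` is
quotienting by `(I ⊔ J) X`, hence `T_I ∘ T_J ≅ T_{I ⊔ J}`; and a functor isomorphic to a composite
of left adjoints is a left adjoint.
-/

open CategoryTheory CategoryTheory.Limits

namespace CategoryTheory

instance Functor.whiskeringRight_obj_preservesZeroMorphisms
    {C D E : Type*} [Category C] [Category D] [Category E] [HasZeroMorphisms D]
    [HasZeroMorphisms E] (F : D ⥤ E) [F.PreservesZeroMorphisms] :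
    ((Functor.whiskeringRight C D E).obj F).PreservesZeroMorphisms where
  map_zero _ _ := by ext; simp

variable {C : Type*} [Category C] [Abelian C]

namespace Subobject

variable {X Y : C}

theorem arrow_comp_eq_zero_of_le {I J : Subobject X} (h : I ≤ J) {f : X ⟶ Y}
    (hJ : J.arrow ≫ f = 0) : I.arrow ≫ f = 0 := by
  rw [← ofLE_arrow h, Category.assoc, hJ, comp_zero]

theorem sup_arrow_comp_eq_zero {I J : Subobject X} {f : X ⟶ Y}
    (hI : I.arrow ≫ f = 0) (hJ : J.arrow ≫ f = 0) : (I ⊔ J).arrow ≫ f = 0 :=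
  arrow_comp_eq_zero_of_le (sup_le (le_kernelSubobject _ _ hI) (le_kernelSubobject _ _ hJ))
    (kernelSubobject_arrow_comp f)

variable (I J : Subobject X)

noncomputable def isColimitCokernelCoforkSup :
    IsColimit (CokernelCofork.ofπ (f := (I ⊔ J).arrow)
      (cokernel.π I.arrow ≫ cokernel.π (J.arrow ≫ cokernel.π I.arrow))
      (sup_arrow_comp_eq_zero (by simp) (by rw [← Category.assoc, cokernel.condition]))) :=
  CokernelCofork.IsColimit.ofπ' _ _ fun g hg =>
    ⟨cokernel.desc _ (cokernel.desc _ g (arrow_comp_eq_zero_of_le le_sup_left hg))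
      (by simpa using arrow_comp_eq_zero_of_le le_sup_right hg), by simp⟩

noncomputable def cokernelCompCokernelπIsoCokernelSup :
    cokernel (J.arrow ≫ cokernel.π I.arrow) ≅ cokernel (I ⊔ J).arrow :=
  (isColimitCokernelCoforkSup I J).coconePointUniqueUpToIso (colimit.isColimit _)

end Subobject

noncomputable def cokernelCompIsoCokernelCompπ {T : C ⥤ C} [T.PreservesZeroMorphisms]
    [PreservesColimitsOfShape WalkingParallelPair T] (π : 𝟭 C ⟶ T) [Epi π]
    {F : C ⥤ C} (α : F ⟶ 𝟭 C) :
    cokernel α ⋙ T ≅ cokernel (α ≫ π) :=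
  have (X : C) : Epi ((Functor.whiskerLeft F π).app X) := inferInstanceAs (Epi (π.app (F.obj X)))
  have : Epi (Functor.whiskerLeft F π) := NatTrans.epi_of_epi_app _
  PreservesCokernel.iso ((Functor.whiskeringRight C C C).obj T) α ≪≫
    (cokernelEpiComp (Functor.whiskerLeft F π) _).symm ≪≫
    cokernelIsoOfEq (by ext X; exact (π.naturality (α.app X)).symm)

end CategoryTheory

/-- Let `I` and `J` be ideal functors on an abelian category `C`, viewed
as subobjects of the identity functor `𝟭 C` in the abelian functor category `C ⥤ C`
(the ideal-functor condition being that the cokernel of the inclusion is a left adjoint).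
Then the join `I ⊔ J` is again an ideal functor, and `T_I ∘ T_J ≅ T_{I ⊔ J}`. -/
theorem sup_ideal_functor_isIdeal_and_cokernel_comp
    {C : Type*} [Category C] [Abelian C]
    (I J : Subobject (𝟭 C : C ⥤ C))
    (hI : (cokernel I.arrow).IsLeftAdjoint) (hJ : (cokernel J.arrow).IsLeftAdjoint) :
    (cokernel (I ⊔ J).arrow).IsLeftAdjoint ∧
      Nonempty ((cokernel J.arrow ⋙ cokernel I.arrow) ≅ cokernel (I ⊔ J).arrow) := by
  let e : cokernel J.arrow ⋙ cokernel I.arrow ≅ cokernel (I ⊔ J).arrow :=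
    cokernelCompIsoCokernelCompπ (cokernel.π I.arrow) J.arrow ≪≫
      Subobject.cokernelCompCokernelπIsoCokernelSup I J
  exact ⟨Functor.isLeftAdjoint_of_iso e, ⟨e⟩⟩
end

section
/- Let B be a ring, M a finitely generated projective right B-module, and N a left B-module. Let Ann_B(N) := {b ∈ B : b·n = 0 for all n ∈ N}, a two-sided ideal of B, and let M·Ann_B(N) ⊆ M denote the additive subgroup generated by all elements m·b with m ∈ M and b ∈ Ann_B(N). Then for x ∈ M, one has x ⊗ y = 0 in M ⊗_B N for all y ∈ N if and only if x ∈ M·Ann_B(N). -/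
open MulOpposite
open scoped TensorProduct

universe u

/-!
By the dual basis lemma, `x = ∑ mᵢ · fᵢ(x)` for finitely many `mᵢ ∈ M` and right-linear
functionals `fᵢ : M → B`. Each functional `f` induces the additive map
`M ⊗[ℤ] N → N`, `m ⊗ n ↦ f(m) · n`, which kills the balancing relations; so if every
`x ⊗ y` vanishes in `M ⊗[B] N`, then every `f(x)` annihilates `N`. Conversely,
`m · b ⊗ y = m ⊗ b · y = 0` whenever `b` annihilates `N`.
-/

/-- The subgroup of balancing relations defining `M ⊗[B] N` as a quotient of the
`ℤ`-tensor product `M ⊗[ℤ] N`; an element `x ⊗ₜ y` vanishes in `M ⊗[B] N` if and only if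
it lies in this subgroup. -/
noncomputable def balancedRel (B M N : Type u) [Ring B] [AddCommGroup M] [AddCommGroup N]
    [Module Bᵐᵒᵖ M] [Module B N] : AddSubgroup (M ⊗[ℤ] N) :=
  AddSubgroup.closure {x : M ⊗[ℤ] N |
    ∃ (b : B) (m : M) (n : N), x = (op b • m) ⊗ₜ[ℤ] n - m ⊗ₜ[ℤ] (b • n)}

theorem Module.Projective.mem_closure_apply_smul {R P : Type*} [Semiring R] [AddCommGroup P]
    [Module R P] [Module.Projective R P] (x : P) :
    x ∈ AddSubgroup.closure {z : P | ∃ (f : P →ₗ[R] R) (p : P), z = f x • p} := by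
  obtain ⟨s, hs⟩ := Module.projective_def.1 ‹_›
  have hsum : ∑ p ∈ (s x).support, s x p • p = x := by
    simpa [Finsupp.linearCombination_apply, Finsupp.sum] using hs x
  nth_rw 2 [← hsum]
  refine sum_mem fun p _ => ?_
  exact AddSubgroup.subset_closure ⟨Finsupp.lapply p ∘ₗ s, p, rfl⟩

section

variable {B M N : Type u} [Ring B] [AddCommGroup M] [AddCommGroup N]
  [Module Bᵐᵒᵖ M] [Module B N]

noncomputable def functionalSMul (f : M →ₗ[Bᵐᵒᵖ] Bᵐᵒᵖ) : M ⊗[ℤ] N →ₗ[ℤ] N :=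
  TensorProduct.lift (LinearMap.mk₂ ℤ (fun m n => (f m).unop • n)
    (fun m m' n => by rw [map_add, unop_add, add_smul])
    (fun c m n => by rw [map_zsmul, unop_smul, smul_assoc])
    (fun m n n' => smul_add _ _ _)
    (fun c m n => smul_comm _ _ _))

@[simp]
lemma functionalSMul_tmul (f : M →ₗ[Bᵐᵒᵖ] Bᵐᵒᵖ) (m : M) (n : N) :
    functionalSMul f (m ⊗ₜ[ℤ] n) = (f m).unop • n := rfl

lemma functionalSMul_eq_zero_of_mem_balancedRel (f : M →ₗ[Bᵐᵒᵖ] Bᵐᵒᵖ) {z : M ⊗[ℤ] N}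
    (hz : z ∈ balancedRel B M N) : functionalSMul f z = 0 := by
  refine (AddSubgroup.closure_le (K := (functionalSMul f).toAddMonoidHom.ker)).2 ?_ hz
  rintro _ ⟨b, m, n, rfl⟩
  simp [mul_smul]

lemma tmul_mem_balancedRel_of_forall_smul_eq_zero {b : B} (hb : ∀ n : N, b • n = 0)
    (m : M) (y : N) : (op b • m) ⊗ₜ[ℤ] y ∈ balancedRel B M N := by
  have hrel : (op b • m) ⊗ₜ[ℤ] y - m ⊗ₜ[ℤ] (b • y) ∈ balancedRel B M N :=
    AddSubgroup.subset_closure ⟨b, m, y, rfl⟩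
  simpa [hb y] using hrel

end

theorem tensor_vanishing_iff_mem_smul_annihilator_general
    (B M N : Type u) [Ring B] [AddCommGroup M] [AddCommGroup N]
    [Module Bᵐᵒᵖ M] [Module B N]
    [Module.Projective Bᵐᵒᵖ M]
    (x : M) :
    (∀ y : N, (x ⊗ₜ[ℤ] y : M ⊗[ℤ] N) ∈ balancedRel B M N) ↔
      x ∈ AddSubgroup.closure
        {z : M | ∃ (m : M) (b : B), (∀ n : N, b • n = 0) ∧ z = op b • m} := by
  constructor
  · intro hx
    refine AddSubgroup.closure_mono ?_ (Module.Projective.mem_closure_apply_smul (R := Bᵐᵒᵖ) x)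
    rintro _ ⟨f, p, rfl⟩
    refine ⟨p, (f x).unop, fun y => ?_, by rw [op_unop]⟩
    simpa using functionalSMul_eq_zero_of_mem_balancedRel f (hx y)
  · intro hx y
    let tmulRight : M →+ M ⊗[ℤ] N := ((TensorProduct.mk ℤ M N).flip y).toAddMonoidHom
    refine (AddSubgroup.closure_le (K := (balancedRel B M N).comap tmulRight)).2 ?_ hx
    rintro _ ⟨m, b, hb, rfl⟩
    exact tmul_mem_balancedRel_of_forall_smul_eq_zero hb m y

/-- Let `B` be a ring, `M` a finitely generated projective right
`B`-module and `N` a left `B`-module.  Then for `x ∈ M`, one has `x ⊗ y = 0` in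
`M ⊗[B] N` for all `y ∈ N` if and only if `x ∈ M · Ann_B(N)`, the additive subgroup
generated by the elements `m · b` with `b` annihilating `N`. -/
theorem tensor_vanishing_iff_mem_smul_annihilator
    (B M N : Type u) [Ring B] [AddCommGroup M] [AddCommGroup N]
    [Module Bᵐᵒᵖ M] [Module B N]
    [Module.Finite Bᵐᵒᵖ M] [Module.Projective Bᵐᵒᵖ M]
    (x : M) :
    (∀ y : N, (x ⊗ₜ[ℤ] y : M ⊗[ℤ] N) ∈ balancedRel B M N) ↔
      x ∈ AddSubgroup.closure
        {z : M | ∃ (m : M) (b : B), (∀ n : N, b • n = 0) ∧ z = op b • m} :=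
  tensor_vanishing_iff_mem_smul_annihilator_general B M N x
end

section
/- Let A be a ring, Λ a well-founded partially ordered set, and {A^{≤λ}}_{λ∈Λ} an ideal filter on A. Then for every simple left A-module V there exists exactly one λ ∈ Λ such that A^{≤λ}·V = V and A^{<λ}·V = 0, where A^{<λ} := ∑_{μ<λ} A^{≤μ}. -/
/-!
Write `N_λ := A^{≤λ} • V`. Since `V` is simple, each `N_λ` is `⊥` or `⊤`, and `∑ A^{≤λ} = A`
forces some `N_λ = ⊤`; a minimal such `λ` exists by well-foundedness. If `λ` and `μ` both work,
then `V = A^{≤μ} A^{≤λ} V ⊆ ∑_{ν ≤ λ, μ} N_ν`, so `N_ν = ⊤` for some `ν ≤ λ, μ`, and since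
everything strictly below `λ` or `μ` kills `V`, `ν = λ = μ`.
-/

universe u v

open Submodule

theorem IsSimpleOrder.exists_eq_top_of_iSup_eq_top {α : Type*} {ι : Sort*} [CompleteLattice α]
    [IsSimpleOrder α] {f : ι → α} (h : ⨆ i, f i = ⊤) : ∃ i, f i = ⊤ := by
  by_contra! hf
  have hbot : ⨆ i, f i = ⊥ := iSup_eq_bot.2 fun i => (eq_bot_or_eq_top (f i)).resolve_right (hf i)
  exact bot_ne_top (hbot.symm.trans h)

section SimpleModule

variable {A : Type*} [Ring A] {V : Type*} [AddCommGroup V] [Module A V]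

theorem Submodule.span_setOf_smul_eq_smul_top (I : Ideal A) :
    span A {x : V | ∃ a ∈ I, ∃ v : V, x = a • v} = I • ⊤ := by
  refine le_antisymm ?_ ?_
  · rw [span_le]
    rintro _ ⟨a, ha, v, rfl⟩
    exact smul_mem_smul ha mem_top
  · rw [smul_le]
    exact fun a ha v _ => subset_span ⟨a, ha, v, rfl⟩

theorem Submodule.smul_top_eq_bot_iff (I : Ideal A) :
    I • (⊤ : Submodule A V) = ⊥ ↔ ∀ a ∈ I, ∀ v : V, a • v = 0 := by
  simp only [eq_bot_iff, smul_le, mem_top, mem_bot, forall_const]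

variable [IsSimpleModule A V] {Λ : Type*} [PartialOrder Λ] (F : Λ → Ideal A)

theorem exists_minimal_smul_top_eq_top [WellFoundedLT Λ] (hsum : ⨆ l, F l = ⊤) :
    ∃ l, F l • (⊤ : Submodule A V) = ⊤ ∧ ∀ m < l, F m • (⊤ : Submodule A V) = ⊥ := by
  have hS : ∃ l, F l • (⊤ : Submodule A V) = ⊤ := by
    apply IsSimpleOrder.exists_eq_top_of_iSup_eq_top
    rw [← iSup_smul, hsum, top_smul]
  obtain ⟨l, hl, hmin⟩ := wellFounded_lt.has_min {l | F l • (⊤ : Submodule A V) = ⊤} hS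
  exact ⟨l, hl, fun m hm => (eq_bot_or_eq_top _).resolve_right fun h => hmin m h hm⟩

theorem eq_of_smul_top_eq_top
    (hprod : ∀ l m : Λ, ∀ a ∈ F l, ∀ b ∈ F m, a * b ∈ ⨆ ν ∈ {ν : Λ | ν ≤ l ∧ ν ≤ m}, F ν)
    {l m : Λ} (hl : F l • (⊤ : Submodule A V) = ⊤) (hl' : ∀ ν < l, F ν • (⊤ : Submodule A V) = ⊥)
    (hm : F m • (⊤ : Submodule A V) = ⊤) (hm' : ∀ ν < m, F ν • (⊤ : Submodule A V) = ⊥) :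
    l = m := by
  have hprod_le : F l * F m ≤ ⨆ ν ∈ {ν : Λ | ν ≤ l ∧ ν ≤ m}, F ν := Ideal.mul_le.2 (hprod l m)
  have hcommon : ⨆ ν ∈ {ν : Λ | ν ≤ l ∧ ν ≤ m}, F ν • (⊤ : Submodule A V) = ⊤ := by
    simp_rw [← iSup_smul]
    refine top_le_iff.1 ?_
    calc ⊤ = F l • F m • (⊤ : Submodule A V) := by rw [hm, hl]
      _ = (F l * F m) • ⊤ := (Submodule.smul_assoc _ _ _).symm
      _ ≤ _ := smul_mono_left hprod_le
  obtain ⟨ν, hν⟩ := IsSimpleOrder.exists_eq_top_of_iSup_eq_top hcommon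
  obtain ⟨⟨hνl, hνm⟩, hνtop⟩ := IsSimpleOrder.exists_eq_top_of_iSup_eq_top hν
  have eq_of_le {k : Λ} (hk : ∀ μ < k, F μ • (⊤ : Submodule A V) = ⊥) (hνk : ν ≤ k) : ν = k :=
    hνk.lt_or_eq.resolve_left fun hlt => bot_ne_top ((hk ν hlt).symm.trans hνtop)
  exact (eq_of_le hl' hνl).symm.trans (eq_of_le hm' hνm)

end SimpleModule

theorem ideal_filter_divides_simple_modules_general
    {A : Type u} [Ring A] {Λ : Type v} [PartialOrder Λ] [WellFoundedLT Λ]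
    (F : Λ → Ideal A)
    (hsum : (⨆ l : Λ, F l) = ⊤)
    (hprod : ∀ l m : Λ, ∀ a ∈ F l, ∀ b ∈ F m,
      a * b ∈ ⨆ ν ∈ {ν : Λ | ν ≤ l ∧ ν ≤ m}, F ν)
    (V : Type u) [AddCommGroup V] [Module A V] (hV : IsSimpleModule A V) :
    ∃! l : Λ,
      Submodule.span A {x : V | ∃ a ∈ F l, ∃ v : V, x = a • v} = ⊤ ∧
      ∀ m : Λ, m < l → ∀ a ∈ F m, ∀ v : V, a • v = 0 := by
  simp_rw [span_setOf_smul_eq_smul_top, ← smul_top_eq_bot_iff]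
  obtain ⟨l, hl, hl'⟩ := exists_minimal_smul_top_eq_top (V := V) F hsum
  exact ⟨l, ⟨hl, hl'⟩, fun m ⟨hm, hm'⟩ => eq_of_smul_top_eq_top F hprod hm hm' hl hl'⟩

/-- Let `A` be a ring, `Λ` a well-founded partially ordered set, and
`{A^{≤λ}}_{λ∈Λ}` an ideal filter on `A`: a family `F` of two-sided ideals of `A` which is
monotone, whose sum is all of `A`, and which satisfies
`A^{≤λ}·A^{≤μ} ⊆ ∑_{ν ≤ λ, μ} A^{≤ν}`.  Then for every simple left `A`-module `V` there
is exactly one `λ ∈ Λ` such that `A^{≤λ}·V = V` and `A^{<λ}·V = 0`. -/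
theorem ideal_filter_divides_simple_modules
    {A : Type u} [Ring A] {Λ : Type v} [PartialOrder Λ] [WellFoundedLT Λ]
    (F : Λ → Ideal A)
    (htwosided : ∀ l : Λ, ∀ a ∈ F l, ∀ b : A, a * b ∈ F l)
    (hmono : Monotone F)
    (hsum : (⨆ l : Λ, F l) = ⊤)
    (hprod : ∀ l m : Λ, ∀ a ∈ F l, ∀ b ∈ F m,
      a * b ∈ ⨆ ν ∈ {ν : Λ | ν ≤ l ∧ ν ≤ m}, F ν)
    (V : Type u) [AddCommGroup V] [Module A V] (hV : IsSimpleModule A V) :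
    ∃! l : Λ,
      Submodule.span A {x : V | ∃ a ∈ F l, ∃ v : V, x = a • v} = ⊤ ∧
      ∀ m : Λ, m < l → ∀ a ∈ F m, ∀ v : V, a • v = 0 :=
  ideal_filter_divides_simple_modules_general F hsum hprod V hV
end

section
/- Let A be a ring and I a two-sided ideal of A. Then I·I = I if and only if the class of left A-modules annihilated by I is closed under extensions; that is, if and only if for every left A-module Y and every submodule X ⊆ Y with I·X = 0 and I·Y ⊆ X, one has I·Y = 0. -/
universe u

/-- Let `A` be a ring and `I` a two-sided ideal of `A`.  Then
`I·I = I` if and only if the class of left `A`-modules annihilated by `I` is closed under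
extensions: for every left `A`-module `Y` and submodule `X ⊆ Y` with `I·X = 0` and
`I·Y ⊆ X`, one has `I·Y = 0`. -/
theorem ideal_idempotent_iff_annihilated_closed_under_extensions
    {A : Type u} [Ring A] (I : Ideal A)
    (htwosided : ∀ a ∈ I, ∀ b : A, a * b ∈ I) :
    Submodule.span A {y : A | ∃ a ∈ I, ∃ b ∈ I, y = a * b} = I ↔
      ∀ (Y : Type u) [AddCommGroup Y] [Module A Y] (X : Submodule A Y),
        (∀ a ∈ I, ∀ x ∈ X, a • x = (0 : Y)) → (∀ a ∈ I, ∀ y : Y, a • y ∈ X) →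
        (∀ a ∈ I, ∀ y : Y, a • y = 0) := by
  constructor
  · intro h Y _ _ X hX hIY a ha y
    rw [← h] at ha
    induction ha using Submodule.span_induction with
    | mem x hx =>
        obtain ⟨a, ha, b, hb, rfl⟩ := hx
        rw [mul_smul]
        exact hX a ha _ (hIY b hb y)
    | zero => simp
    | add x z _ _ hx hz => rw [add_smul, hx, hz, add_zero]
    | smul r x _ hx => rw [smul_eq_mul, mul_smul, hx, smul_zero]
  · intro h
    set J := Submodule.span A {y : A | ∃ a ∈ I, ∃ b ∈ I, y = a * b} with hJdef
    have hJI : J ≤ I := Submodule.span_le.mpr (by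
      rintro _ ⟨a, ha, b, hb, rfl⟩; exact htwosided a ha b)
    refine le_antisymm hJI fun a ha => ?_
    have key := h (A ⧸ J) (Submodule.map J.mkQ I)
      (by
        rintro c hc _ ⟨x, hx, rfl⟩
        have : c • J.mkQ x = J.mkQ (c * x) := (map_smul J.mkQ c x).symm
        rw [this]
        rw [Submodule.mkQ_apply, Submodule.Quotient.mk_eq_zero]
        exact Submodule.subset_span ⟨c, hc, x, hx, rfl⟩)
      (by
        intro c hc y
        obtain ⟨b, rfl⟩ := J.mkQ_surjective y
        have : c • J.mkQ b = J.mkQ (c * b) := (map_smul J.mkQ c b).symm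
        rw [this]
        exact ⟨c * b, htwosided c hc b, rfl⟩)
      a ha (J.mkQ 1)
    have : J.mkQ a = 0 := by
      have := key
      rwa [← map_smul, smul_eq_mul, mul_one] at this
    rwa [Submodule.mkQ_apply, Submodule.Quotient.mk_eq_zero] at this
end
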